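/- arXiv:math/0004166 — 2 statements merged into one kernel-verified Lean document; each statement's English description precedes it below -/
import Mathlib

section
/- Let X be a Banach space without the point of continuity property and let 0 < ε < 1. Then there exists a norm-closed subset A of X such that (1) every nonempty relatively weakly open subset of A has diameter greater than 1 − ε, and (2) sup{‖a‖ : a ∈ A} = 1. -/
open Filter Topology

/-- `V` is open in the weak topology of the normed space `X`: around each of its
points it contains a basic weak neighbourhood determined by finitely many
continuous functionals. -/
def IsWeaklyOpen {X : Type*} [NormedAddCommGroup X] [NormedSpace ℝ X] (V : Set X) : Prop :=
  ∀ x ∈ V, ∃ (s : Finset (X →L[ℝ] ℝ)) (δ : ℝ), 0 < δ ∧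
    { y : X | ∀ f ∈ s, |f y - f x| < δ } ⊆ V

/-- `X` has the point of continuity property (PCP): every nonempty bounded subset
of `X` admits nonempty relatively weakly open subsets of arbitrarily small
diameter. -/
def HasPCP (X : Type*) [NormedAddCommGroup X] [NormedSpace ℝ X] : Prop :=
  ∀ A : Set X, A.Nonempty → Bornology.IsBounded A → ∀ ε : ℝ, 0 < ε →
    ∃ V : Set X, IsWeaklyOpen V ∧ (V ∩ A).Nonempty ∧ Metric.diam (V ∩ A) < ε

/-!
Failure of PCP gives a nonempty bounded set `A₀` all of whose nonempty relatively weakly open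
pieces have diameter at least some `r > 0`. If `m` is the infimum of these diameters, a piece
`S` of `A₀` with `diam S < m / (1 - ε)` still has all its pieces of diameter `≥ m`, and so does
its norm closure, since weakly open sets are norm open. Translating a point `x₀` of the closure
to the origin and dividing by `R = sup ‖y - x₀‖ ≤ diam S` yields `A`, with `sup ‖a‖ = 1` and
all pieces of diameter `≥ m / R > 1 - ε`.
-/

open Metric Bornology
open scoped Pointwise

section

variable {X Y : Type*} [NormedAddCommGroup X] [NormedSpace ℝ X]
  [NormedAddCommGroup Y] [NormedSpace ℝ Y]

lemma isWeaklyOpen_univ : IsWeaklyOpen (Set.univ : Set X) :=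
  fun _ _ => ⟨∅, 1, one_pos, Set.subset_univ _⟩

lemma IsWeaklyOpen.inter {V W : Set X} (hV : IsWeaklyOpen V) (hW : IsWeaklyOpen W) :
    IsWeaklyOpen (V ∩ W) := by
  classical
  intro x ⟨hxV, hxW⟩
  obtain ⟨s₁, δ₁, hδ₁, hs₁⟩ := hV x hxV
  obtain ⟨s₂, δ₂, hδ₂, hs₂⟩ := hW x hxW
  refine ⟨s₁ ∪ s₂, min δ₁ δ₂, lt_min hδ₁ hδ₂, fun y hy => ⟨hs₁ fun f hf => ?_, hs₂ fun f hf => ?_⟩⟩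
  · exact (hy f (Finset.mem_union_left _ hf)).trans_le (min_le_left _ _)
  · exact (hy f (Finset.mem_union_right _ hf)).trans_le (min_le_right _ _)

lemma IsWeaklyOpen.preimage_add_const {V : Set Y} (hV : IsWeaklyOpen V) (T : X →L[ℝ] Y)
    (b : Y) : IsWeaklyOpen ((fun x => T x + b) ⁻¹' V) := by
  classical
  intro x hx
  obtain ⟨s, δ, hδ, hs⟩ := hV _ hx
  refine ⟨s.image (·.comp T), δ, hδ, fun y hy => hs fun f hf => ?_⟩
  simpa using hy (f.comp T) (Finset.mem_image_of_mem _ hf)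

lemma IsWeaklyOpen.isOpen {V : Set X} (hV : IsWeaklyOpen V) : IsOpen V := by
  refine isOpen_iff_mem_nhds.2 fun x hx => ?_
  obtain ⟨s, δ, hδ, hs⟩ := hV x hx
  refine mem_of_superset ((Finset.eventually_all s).2 fun f _ => ?_) hs
  simpa [Real.dist_eq] using Metric.tendsto_nhds.1 (f.continuous.tendsto x) δ hδ

def WeakPiecesDiamGE (S : Set X) (r : ℝ) : Prop :=
  ∀ V : Set X, IsWeaklyOpen V → (V ∩ S).Nonempty → r ≤ diam (V ∩ S)

variable {S : Set X} {r : ℝ}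

lemma WeakPiecesDiamGE.le_diam (hS : WeakPiecesDiamGE S r) (hne : S.Nonempty) :
    r ≤ diam S := by
  simpa using hS Set.univ isWeaklyOpen_univ (by simpa using hne)

lemma WeakPiecesDiamGE.mono {r' : ℝ} (hS : WeakPiecesDiamGE S r) (h : r' ≤ r) :
    WeakPiecesDiamGE S r' :=
  fun V hV hne => h.trans (hS V hV hne)

lemma WeakPiecesDiamGE.closure (hS : WeakPiecesDiamGE S r) (hb : IsBounded S) :
    WeakPiecesDiamGE (closure S) r := by
  intro V hV hne
  have hsub : V ∩ _root_.closure S ⊆ _root_.closure (V ∩ S) := hV.isOpen.inter_closure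
  have hne' : (V ∩ S).Nonempty := closure_nonempty_iff.1 (hne.mono hsub)
  exact (hS V hV hne').trans <| diam_mono (Set.inter_subset_inter_right _ subset_closure)
    (hb.closure.subset Set.inter_subset_right)

lemma diam_image_smul_sub (x₀ : X) {c : ℝ} (hc : 0 ≤ c) (T : Set X) :
    diam ((fun y => c • (y - x₀)) '' T) = c * diam T := by
  rw [← Set.image_image (c • ·) (· - x₀), Set.image_smul, diam_smul₀, Real.norm_of_nonneg hc]
  exact congrArg (c * ·) ((IsometryEquiv.subRight x₀).diam_image T)

lemma WeakPiecesDiamGE.image_smul_sub (hS : WeakPiecesDiamGE S r) (x₀ : X) {c : ℝ}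
    (hc : 0 < c) : WeakPiecesDiamGE ((fun y => c • (y - x₀)) '' S) (c * r) := by
  intro V hV hne
  have hg : (fun y => c • (y - x₀)) =
      fun y => (c • ContinuousLinearMap.id ℝ X) y + -(c • x₀) := by
    funext y; simp [sub_eq_add_neg]
  have hW : IsWeaklyOpen ((fun y => c • (y - x₀)) ⁻¹' V) := hg ▸ hV.preimage_add_const _ _
  rw [← Set.image_preimage_inter] at hne ⊢
  rw [diam_image_smul_sub x₀ hc.le]
  exact mul_le_mul_of_nonneg_left (hS _ hW (Set.image_nonempty.1 hne)) hc.le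

lemma exists_weakPiecesDiamGE_of_not_hasPCP (hX : ¬ HasPCP X) :
    ∃ S : Set X, S.Nonempty ∧ IsBounded S ∧ ∃ r, 0 < r ∧ WeakPiecesDiamGE S r := by
  unfold HasPCP at hX
  push Not at hX
  exact hX

/-- Passing to a piece whose diameter nearly attains the infimum `m` of the diameters of all
pieces: its own pieces are pieces of `S`, so they still have diameter at least `m`. -/
lemma WeakPiecesDiamGE.exists_subset_diam_lt (hS : WeakPiecesDiamGE S r) (hne : S.Nonempty)
    (hr : 0 < r) {t : ℝ} (ht : 1 < t) :
    ∃ T ⊆ S, T.Nonempty ∧ ∃ m, 0 < m ∧ WeakPiecesDiamGE T m ∧ diam T < t * m := by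
  set D : Set ℝ := {d | ∃ V, IsWeaklyOpen V ∧ (V ∩ S).Nonempty ∧ diam (V ∩ S) = d}
  have hD : D.Nonempty := ⟨_, Set.univ, isWeaklyOpen_univ, by simpa using hne, rfl⟩
  have hDr : ∀ d ∈ D, r ≤ d := by
    rintro _ ⟨V, hV, hVne, rfl⟩
    exact hS V hV hVne
  have hm : 0 < sInf D := hr.trans_le (le_csInf hD hDr)
  obtain ⟨_, ⟨V, hV, hVne, rfl⟩, hlt⟩ := exists_lt_of_csInf_lt hD (lt_mul_left hm ht)
  refine ⟨V ∩ S, Set.inter_subset_right, hVne, sInf D, hm, fun W hW hWne => ?_, hlt⟩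
  rw [← Set.inter_assoc] at hWne ⊢
  exact csInf_le ⟨r, hDr⟩ ⟨_, hW.inter hV, hWne, rfl⟩

lemma sSup_norm_image_smul_sub (x₀ : X) {c : ℝ} (hc : 0 ≤ c) (S : Set X) :
    sSup ((‖·‖) '' ((fun y => c • (y - x₀)) '' S)) = c * sSup ((fun y => ‖y - x₀‖) '' S) := by
  have : (‖·‖) '' ((fun y => c • (y - x₀)) '' S) = c • ((fun y => ‖y - x₀‖) '' S) := by
    rw [Set.image_image, ← Set.image_smul, Set.image_image]
    simp [norm_smul, Real.norm_of_nonneg hc]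
  rw [this, Real.sSup_smul_of_nonneg hc, smul_eq_mul]

/-- Translate a point `x₀` of `S` to the origin and divide by `R = sup_{y ∈ S} ‖y - x₀‖`, which
lies between `diam S / 2` and `diam S`. -/
lemma WeakPiecesDiamGE.exists_normalized (hS : WeakPiecesDiamGE S r) (hSc : IsClosed S)
    (hne : S.Nonempty) (hb : IsBounded S) (hr : 0 < r) :
    ∃ A : Set X, IsClosed A ∧ WeakPiecesDiamGE A (r / diam S) ∧
      sSup ((‖·‖) '' A) = 1 := by
  obtain ⟨x₀, hx₀⟩ := hne
  set R := sSup ((fun y => ‖y - x₀‖) '' S)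
  have hdist : ∀ y ∈ S, ‖y - x₀‖ ≤ diam S := fun y hy =>
    dist_eq_norm y x₀ ▸ dist_le_diam_of_mem hb hy hx₀
  have hle_R : ∀ y ∈ S, ‖y - x₀‖ ≤ R := fun y hy =>
    le_csSup ⟨diam S, by rintro _ ⟨z, hz, rfl⟩; exact hdist z hz⟩ ⟨y, hy, rfl⟩
  have hR_le : R ≤ diam S :=
    csSup_le ⟨_, x₀, hx₀, rfl⟩ (by rintro _ ⟨y, hy, rfl⟩; exact hdist y hy)
  have hdiam_le : diam S ≤ 2 * R := by
    refine diam_le_of_forall_dist_le (by linarith [hle_R x₀ hx₀, norm_nonneg (x₀ - x₀)])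
      fun y hy z hz => ?_
    calc dist y z ≤ ‖y - x₀‖ + ‖z - x₀‖ := by
          rw [dist_eq_norm, ← sub_sub_sub_cancel_right y z x₀]; exact norm_sub_le _ _
      _ ≤ 2 * R := by linarith [hle_R y hy, hle_R z hz]
  have hR : 0 < R := by linarith [hS.le_diam ⟨x₀, hx₀⟩]
  refine ⟨(fun y => R⁻¹ • (y - x₀)) '' S, ?_, ?_, ?_⟩
  · exact ((Homeomorph.subRight x₀).trans
      (Homeomorph.smulOfNeZero R⁻¹ (inv_ne_zero hR.ne'))).isClosedMap S hSc
  · refine (hS.image_smul_sub x₀ (inv_pos.2 hR)).mono ?_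
    rw [inv_mul_eq_div]
    exact div_le_div_of_nonneg_left hr.le hR hR_le
  · rw [sSup_norm_image_smul_sub x₀ (inv_nonneg.2 hR.le), inv_mul_cancel₀ hR.ne']

end

theorem exists_closed_set_of_not_hasPCP_general
    (X : Type*) [NormedAddCommGroup X] [NormedSpace ℝ X]
    (hX : ¬ HasPCP X) (ε : ℝ) (hε0 : 0 < ε) (hε1 : ε < 1) :
    ∃ A : Set X, IsClosed A ∧
      (∀ V : Set X, IsWeaklyOpen V → (V ∩ A).Nonempty →
        1 - ε < Metric.diam (V ∩ A)) ∧
      sSup ((fun a : X => ‖a‖) '' A) = 1 := by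
  obtain ⟨A₀, hA₀ne, hA₀b, r, hr, hA₀⟩ := exists_weakPiecesDiamGE_of_not_hasPCP hX
  have hε : 0 < 1 - ε := by linarith
  obtain ⟨T, hTA₀, hTne, m, hm, hT, hTdiam⟩ :=
    hA₀.exists_subset_diam_lt hA₀ne hr ((one_lt_inv₀ hε).2 (by linarith))
  have hTb : IsBounded T := hA₀b.subset hTA₀
  obtain ⟨A, hAc, hA, hA1⟩ := (hT.closure hTb).exists_normalized isClosed_closure
    hTne.closure hTb.closure hm
  refine ⟨A, hAc, fun V hV hVne => lt_of_lt_of_le ?_ (hA V hV hVne), hA1⟩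
  rw [diam_closure, lt_div_iff₀ (hm.trans_le (hT.le_diam hTne))]
  calc (1 - ε) * diam T < (1 - ε) * ((1 - ε)⁻¹ * m) := mul_lt_mul_of_pos_left hTdiam hε
    _ = m := by rw [← mul_assoc, mul_inv_cancel₀ hε.ne', one_mul]

/-- **Lemma.** If a Banach space `X` fails the point of continuity
property and `0 < ε < 1`, then there is a norm-closed subset `A` of `X` such that
(1) every nonempty relatively weakly open subset of `A` has diameter greater than
`1 − ε`, and (2) `sup { ‖a‖ : a ∈ A } = 1`. -/
theorem exists_closed_set_of_not_hasPCP
    (X : Type*) [NormedAddCommGroup X] [NormedSpace ℝ X] [CompleteSpace X]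
    (hX : ¬ HasPCP X) (ε : ℝ) (hε0 : 0 < ε) (hε1 : ε < 1) :
    ∃ A : Set X, IsClosed A ∧
      (∀ V : Set X, IsWeaklyOpen V → (V ∩ A).Nonempty →
        1 - ε < Metric.diam (V ∩ A)) ∧
      sSup ((fun a : X => ‖a‖) '' A) = 1 :=
  exists_closed_set_of_not_hasPCP_general X hX ε hε0 hε1
end

section
/- For the space ℓ₁ of absolutely summable real sequences, δ̄_{ℓ₁}(ε) = ε for every ε ∈ [0,1]. -/
/-!
In `ℓ₁`, a unit vector `x` has almost all of its mass on a finite set `s` of coordinates, and a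
unit vector `y` of the closed finite-codimensional subspace of sequences vanishing on `s` is
almost disjointly supported from `x`, so `‖x + εy‖ ≈ 1 + ε`. Hence the supremum over `Y` is at
least `ε`; it is at most `ε` by the triangle inequality, because in an infinite-dimensional space
every finite-codimensional subspace contains unit vectors.
-/

open Filter Topology

/-- The modulus of asymptotic uniform convexity
`δ̄_X(ε) = inf_{x ∈ S(X)} sup_Y inf_{y ∈ S(Y)} (‖x + εy‖ − 1)`, where `Y` ranges
over the closed finite-codimensional subspaces of `X`. -/
noncomputable def aucMod (X : Type*) [NormedAddCommGroup X] [NormedSpace ℝ X] (ε : ℝ) : ℝ :=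
  sInf { d : ℝ | ∃ x : X, ‖x‖ = 1 ∧
    d = sSup { c : ℝ | ∃ Y : Submodule ℝ X, IsClosed (Y : Set X) ∧
      FiniteDimensional ℝ (X ⧸ Y) ∧
      c = sInf { r : ℝ | ∃ y ∈ Y, ‖y‖ = 1 ∧ r = ‖x + ε • y‖ - 1 } } }

open scoped lp ENNReal

section Modulus

variable {X : Type*} [NormedAddCommGroup X] [NormedSpace ℝ X]

noncomputable def sphereInf (x : X) (ε : ℝ) (Y : Submodule ℝ X) : ℝ :=
  sInf { r : ℝ | ∃ y ∈ Y, ‖y‖ = 1 ∧ r = ‖x + ε • y‖ - 1 }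

/-- `aucMod X ε` unfolds to the infimum of `aucModAt x ε` over the unit sphere. -/
noncomputable def aucModAt (x : X) (ε : ℝ) : ℝ :=
  sSup { c : ℝ | ∃ Y : Submodule ℝ X, IsClosed (Y : Set X) ∧
    FiniteDimensional ℝ (X ⧸ Y) ∧ c = sphereInf x ε Y }

lemma Submodule.exists_norm_eq_one_of_finiteDimensional_quotient
    (hX : ¬ FiniteDimensional ℝ X) (Y : Submodule ℝ X) [FiniteDimensional ℝ (X ⧸ Y)] :
    ∃ y ∈ Y, ‖y‖ = 1 := by
  have : Nontrivial Y := by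
    rw [Submodule.nontrivial_iff_ne_bot]
    rintro rfl
    exact hX (Module.Finite.of_submodule_quotient ⊥)
  obtain ⟨y, hy⟩ := exists_norm_eq Y zero_le_one
  exact ⟨y, y.2, hy⟩

lemma aucMod_eq_of_forall_aucModAt_eq (hX : ¬ FiniteDimensional ℝ X) {ε c : ℝ}
    (h : ∀ x : X, ‖x‖ = 1 → aucModAt x ε = c) : aucMod X ε = c := by
  suffices { d : ℝ | ∃ x : X, ‖x‖ = 1 ∧ d = aucModAt x ε } = {c} from
    (congrArg sInf this).trans (csInf_singleton c)
  ext d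
  constructor
  · rintro ⟨x, hx, rfl⟩
    exact h x hx
  · rintro rfl
    obtain ⟨x, -, hx⟩ := (⊤ : Submodule ℝ X).exists_norm_eq_one_of_finiteDimensional_quotient hX
    exact ⟨x, hx, (h x hx).symm⟩

lemma sphereInf_le_of_mem {x y : X} {ε : ℝ} {Y : Submodule ℝ X} (hyY : y ∈ Y) (hy : ‖y‖ = 1) :
    sphereInf x ε Y ≤ ‖x + ε • y‖ - 1 :=
  csInf_le ⟨-1, by rintro r ⟨y, -, -, rfl⟩; linarith [norm_nonneg (x + ε • y)]⟩ ⟨y, hyY, hy, rfl⟩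

lemma le_sphereInf {x : X} {ε c : ℝ} {Y : Submodule ℝ X} (hY : ∃ y ∈ Y, ‖y‖ = 1)
    (h : ∀ y ∈ Y, ‖y‖ = 1 → c ≤ ‖x + ε • y‖ - 1) : c ≤ sphereInf x ε Y := by
  obtain ⟨y₀, hy₀Y, hy₀⟩ := hY
  exact le_csInf ⟨_, y₀, hy₀Y, hy₀, rfl⟩ (by rintro r ⟨y, hyY, hy, rfl⟩; exact h y hyY hy)

lemma sphereInf_le_of_norm_eq_one (hX : ¬ FiniteDimensional ℝ X) {x : X} (hx : ‖x‖ = 1) {ε : ℝ}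
    (hε : 0 ≤ ε) (Y : Submodule ℝ X) [FiniteDimensional ℝ (X ⧸ Y)] :
    sphereInf x ε Y ≤ ε := by
  obtain ⟨y, hyY, hy⟩ := Y.exists_norm_eq_one_of_finiteDimensional_quotient hX
  calc sphereInf x ε Y ≤ ‖x + ε • y‖ - 1 := sphereInf_le_of_mem hyY hy
    _ ≤ ‖x‖ + ‖ε • y‖ - 1 := by gcongr; exact norm_add_le _ _
    _ = ε := by rw [norm_smul, hx, hy, Real.norm_of_nonneg hε]; ring

lemma aucModAt_le (hX : ¬ FiniteDimensional ℝ X) {x : X} (hx : ‖x‖ = 1) {ε : ℝ} (hε : 0 ≤ ε) :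
    aucModAt x ε ≤ ε :=
  Real.sSup_le (by rintro c ⟨Y, -, hY, rfl⟩; exact sphereInf_le_of_norm_eq_one hX hx hε Y) hε

lemma sphereInf_le_aucModAt (hX : ¬ FiniteDimensional ℝ X) {x : X} (hx : ‖x‖ = 1) {ε : ℝ}
    (hε : 0 ≤ ε) {Y : Submodule ℝ X} (hYc : IsClosed (Y : Set X))
    [FiniteDimensional ℝ (X ⧸ Y)] : sphereInf x ε Y ≤ aucModAt x ε :=
  le_csSup ⟨ε, by rintro c ⟨Y', -, hY', rfl⟩; exact sphereInf_le_of_norm_eq_one hX hx hε Y'⟩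
    ⟨Y, hYc, inferInstance, rfl⟩

end Modulus

lemma lp.not_finiteDimensional {α : Type*} [Infinite α] (p : ℝ≥0∞) :
    ¬ FiniteDimensional ℝ ℓ^p(α, ℝ) := by
  intro _
  have : FiniteDimensional ℝ ℓ⁰(α, ℝ) :=
    FiniteDimensional.of_injective (lp.linearMapOfLE ℝ (fun _ : α => ℝ) (zero_le : 0 ≤ p))
      fun f g hfg => by ext i; exact congrFun (congrArg (⇑) hfg) i
  have := Module.Finite.finite_basis (lp.zeroBasis (α := α) (𝕜 := ℝ))
  exact not_finite α

lemma lp.hasSum_norm_one {α E : Type*} [NormedAddCommGroup E] (f : ℓ¹(α, E)) :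
    HasSum (fun i => ‖f i‖) ‖f‖ := by
  simpa using lp.hasSum_norm (p := 1) (by simp) f

/-- In `ℓ₁`, adding `y` can only cancel the part of `x` outside the set where `y` vanishes. -/
lemma lp.norm_sub_norm_add_two_mul_sum_le_norm_add {α E : Type*} [NormedAddCommGroup E]
    {x y : ℓ¹(α, E)} {s : Finset α} (hy : ∀ i ∈ s, y i = 0) :
    ‖y‖ - ‖x‖ + 2 * ∑ i ∈ s, ‖x i‖ ≤ ‖x + y‖ := by
  classical
  have hs : HasSum (fun i => if i ∈ s then ‖x i‖ else 0) (∑ i ∈ s, ‖x i‖) := by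
    simpa using hasSum_sum_of_ne_finset_zero (f := fun i => if i ∈ s then ‖x i‖ else 0) (s := s)
      fun i hi => if_neg hi
  refine hasSum_le (fun i => ?_)
    (((lp.hasSum_norm_one y).sub (lp.hasSum_norm_one x)).add (hs.mul_left 2))
    (lp.hasSum_norm_one (x + y))
  by_cases hi : i ∈ s
  · simp [hi, hy i hi, two_mul]
  · simpa [hi, add_comm] using norm_sub_norm_le (y i) (-x i)

section Vanishing

variable {α : Type*} (p : ℝ≥0∞) [Fact (1 ≤ p)]

noncomputable def vanishingSubspace (s : Finset α) : Submodule ℝ ℓ^p(α, ℝ) :=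
  LinearMap.ker (ContinuousLinearMap.pi fun i : s => lp.evalCLM ℝ (fun _ : α => ℝ) p i :
    ℓ^p(α, ℝ) →ₗ[ℝ] s → ℝ)

variable {p}

lemma mem_vanishingSubspace {s : Finset α} {f : ℓ^p(α, ℝ)} :
    f ∈ vanishingSubspace p s ↔ ∀ i ∈ s, f i = 0 := by
  simp [vanishingSubspace, funext_iff, lp.evalCLM]

lemma isClosed_vanishingSubspace (s : Finset α) :
    IsClosed (vanishingSubspace p s : Set ℓ^p(α, ℝ)) :=
  ContinuousLinearMap.isClosed_ker _

instance (s : Finset α) : FiniteDimensional ℝ (ℓ^p(α, ℝ) ⧸ vanishingSubspace p s) :=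
  Module.Finite.equiv (LinearMap.quotKerEquivRange _).symm

end Vanishing

section L1

variable {α : Type*} [Infinite α]

lemma le_sphereInf_vanishingSubspace (x : ℓ¹(α, ℝ)) {ε : ℝ} (hε : 0 ≤ ε) (s : Finset α) :
    ε - ‖x‖ - 1 + 2 * ∑ i ∈ s, ‖x i‖ ≤ sphereInf x ε (vanishingSubspace 1 s) := by
  refine le_sphereInf ((vanishingSubspace 1 s).exists_norm_eq_one_of_finiteDimensional_quotient
    (lp.not_finiteDimensional 1)) fun y hyY hy => ?_
  have hεy : ∀ i ∈ s, (ε • y) i = 0 := fun i hi => by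
    simp [(mem_vanishingSubspace.mp hyY) i hi]
  have := lp.norm_sub_norm_add_two_mul_sum_le_norm_add (x := x) hεy
  rw [norm_smul, hy, Real.norm_of_nonneg hε, mul_one] at this
  linarith

lemma aucModAt_l1 {x : ℓ¹(α, ℝ)} (hx : ‖x‖ = 1) {ε : ℝ} (hε : 0 ≤ ε) : aucModAt x ε = ε := by
  have hX := lp.not_finiteDimensional (α := α) 1
  refine le_antisymm (aucModAt_le hX hx hε) (le_of_forall_pos_le_add fun δ hδ => ?_)
  obtain ⟨s, hs⟩ : ∃ s : Finset α, 1 - δ / 2 < ∑ i ∈ s, ‖x i‖ := by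
    have hsum := lp.hasSum_norm_one x
    rw [hx] at hsum
    exact (hsum.eventually (Ioi_mem_nhds (by linarith))).exists
  calc ε ≤ sphereInf x ε (vanishingSubspace 1 s) + δ := by
        linarith [le_sphereInf_vanishingSubspace x hε s]
    _ ≤ aucModAt x ε + δ := by
        gcongr
        exact sphereInf_le_aucModAt hX hx hε (isClosed_vanishingSubspace s)

end L1

/-- For the space `ℓ₁` of absolutely summable real sequences,
`δ̄_{ℓ₁}(ε) = ε` for every `ε ∈ [0,1]`. -/
theorem aucMod_l1
    (ε : ℝ) (hε : ε ∈ Set.Icc (0 : ℝ) 1) :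
    aucMod (lp (fun _ : ℕ => ℝ) 1) ε = ε :=
  aucMod_eq_of_forall_aucModAt_eq (lp.not_finiteDimensional 1) fun _ hx => aucModAt_l1 hx hε.1
end
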